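/- Let μ ≠ 0, Ψ smooth, M(u) = exp(−μΨ(u)), and Φ(u) an antiderivative of μ⁻¹exp(μΨ(u)). If u: ℝ² → ℝ is a smooth solution of u_t = D_x{M(u) D_x D_t Ψ(u)}, then λ = μ⁻¹D_x²Ψ(u) − ½(D_xΨ(u))² − Φ(u) satisfies ∂λ/∂t = 0. -/

import Mathlib

/-- partial derivative in the first variable (x) -/
noncomputable def pdx (w : ℝ → ℝ → ℝ) : ℝ → ℝ → ℝ := fun x t => deriv (fun x' => w x' t) x
/-- partial derivative in the second variable (t) -/
noncomputable def pdt (w : ℝ → ℝ → ℝ) : ℝ → ℝ → ℝ := fun x t => deriv (fun t' => w x t') t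

lemma hasDerivAt_fst {F : ℝ×ℝ → ℝ} {x t : ℝ} (hF : DifferentiableAt ℝ F (x,t)) :
    HasDerivAt (fun x' => F (x', t)) (fderiv ℝ F (x,t) (1,0)) x := by
  have h : HasDerivAt (fun x' : ℝ => ((x' : ℝ), t)) (1,0) x :=
    HasDerivAt.prodMk (hasDerivAt_id x) (hasDerivAt_const x t)
  exact hF.hasFDerivAt.comp_hasDerivAt x h

lemma hasDerivAt_snd {F : ℝ×ℝ → ℝ} {x t : ℝ} (hF : DifferentiableAt ℝ F (x,t)) :
    HasDerivAt (fun t' => F (x, t')) (fderiv ℝ F (x,t) (0,1)) t := by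
  have h : HasDerivAt (fun t' : ℝ => ((x : ℝ), t')) (0,1) t :=
    HasDerivAt.prodMk (hasDerivAt_const t x) (hasDerivAt_id t)
  exact hF.hasFDerivAt.comp_hasDerivAt t h

lemma contDiff_fderiv_apply {F : ℝ×ℝ→ℝ} (hF : ContDiff ℝ (⊤ : ℕ∞) F) (v : ℝ×ℝ) :
    ContDiff ℝ (⊤ : ℕ∞) (fun p => fderiv ℝ F p v) :=
  (hF.fderiv_right (by simp)).clm_apply contDiff_const

lemma fderiv_swap {F : ℝ×ℝ→ℝ} (hF : ContDiff ℝ (⊤ : ℕ∞) F) (p v w : ℝ×ℝ) :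
    fderiv ℝ (fun q => fderiv ℝ F q v) p w = fderiv ℝ (fun q => fderiv ℝ F q w) p v := by
  have hd : ∀ y, HasFDerivAt F (fderiv ℝ F y) y := fun y => (hF.differentiable (by simp) y).hasFDerivAt
  have hcd : ContDiff ℝ (⊤ : ℕ∞) (fderiv ℝ F) := hF.fderiv_right (by simp)
  have h2 : HasFDerivAt (fderiv ℝ F) (fderiv ℝ (fderiv ℝ F) p) p :=
    (hcd.differentiable (by simp) p).hasFDerivAt
  have key : ∀ a b : ℝ×ℝ, fderiv ℝ (fun q => fderiv ℝ F q a) p b = fderiv ℝ (fderiv ℝ F) p b a := by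
    intro a b
    have h3 : HasFDerivAt (fun q => fderiv ℝ F q a)
        ((ContinuousLinearMap.apply ℝ ℝ a).comp (fderiv ℝ (fderiv ℝ F) p)) p :=
      (ContinuousLinearMap.apply ℝ ℝ a).hasFDerivAt.comp p h2
    rw [h3.fderiv]; rfl
  rw [key v w, key w v]
  exact second_derivative_symmetric hd h2 w v

lemma pdx_eq {w : ℝ→ℝ→ℝ} {G : ℝ×ℝ→ℝ} (hw : ∀ a b, w a b = G (a,b)) {x t : ℝ}
    (hG : DifferentiableAt ℝ G (x,t)) : pdx w x t = fderiv ℝ G (x,t) (1,0) := by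
  have h : (fun x' => w x' t) = fun x' => G (x', t) := funext fun a => hw a t
  show deriv (fun x' => w x' t) x = _
  rw [h]
  exact (hasDerivAt_fst hG).deriv

lemma pdt_eq {w : ℝ→ℝ→ℝ} {G : ℝ×ℝ→ℝ} (hw : ∀ a b, w a b = G (a,b)) {x t : ℝ}
    (hG : DifferentiableAt ℝ G (x,t)) : pdt w x t = fderiv ℝ G (x,t) (0,1) := by
  have h : (fun t' => w x t') = fun t' => G (x, t') := funext fun b => hw x b
  show deriv (fun t' => w x t') t = _
  rw [h]
  exact (hasDerivAt_snd hG).deriv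

/-- For `M(u) = exp(−μΨ(u))` with `μ ≠ 0` and `Φ' = μ⁻¹ e^{μΨ}`,
a smooth solution of `u_t = D_x{e^{−μΨ(u)} D_x D_t Ψ(u)}` has first integral
`λ = μ⁻¹ D_x²Ψ(u) − ½(D_xΨ(u))² − Φ(u)` with `∂λ/∂t = 0`. -/
theorem stmt11 (μ : ℝ) (hμ : μ ≠ 0) (Ψ Φ : ℝ → ℝ) (u : ℝ → ℝ → ℝ)
    (hΨ : ContDiff ℝ (⊤ : ℕ∞) Ψ)
    (hΦ : ∀ s, deriv Φ s = μ⁻¹ * Real.exp (μ * Ψ s))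
    (hu : ContDiff ℝ (⊤ : ℕ∞) (fun p : ℝ × ℝ => u p.1 p.2))
    (hpde : ∀ x t, pdt u x t =
      deriv (fun x' => Real.exp (-μ * Ψ (u x' t)) *
        pdx (pdt (fun x t => Ψ (u x t))) x' t) x) :
    ∀ x t, deriv (fun t' =>
      μ⁻¹ * pdx (pdx (fun x t => Ψ (u x t))) x t'
        - (1 / 2) * (pdx (fun x t => Ψ (u x t)) x t') ^ 2 - Φ (u x t')) t = 0 := by
  intro x t
  -- uncurried functions
  set F : ℝ×ℝ → ℝ := fun p => Ψ (u p.1 p.2) with hFdef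
  have hF : ContDiff ℝ (⊤ : ℕ∞) F := hΨ.comp hu
  have hFd : ∀ p, DifferentiableAt ℝ F p := fun p => (hF.differentiable (by simp) p)
  -- first partials
  set A : ℝ×ℝ → ℝ := fun p => fderiv ℝ F p (1,0) with hAdef
  set B : ℝ×ℝ → ℝ := fun p => fderiv ℝ F p (0,1) with hBdef
  have hA : ContDiff ℝ (⊤ : ℕ∞) A := contDiff_fderiv_apply hF _
  have hB : ContDiff ℝ (⊤ : ℕ∞) B := contDiff_fderiv_apply hF _
  set A1 : ℝ×ℝ → ℝ := fun p => fderiv ℝ A p (1,0) with hA1def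
  set B1 : ℝ×ℝ → ℝ := fun p => fderiv ℝ B p (1,0) with hB1def
  have hA1 : ContDiff ℝ (⊤ : ℕ∞) A1 := contDiff_fderiv_apply hA _
  have hB1 : ContDiff ℝ (⊤ : ℕ∞) B1 := contDiff_fderiv_apply hB _
  -- pdx / pdt rewrites
  have hAeq : ∀ a b, pdx (fun x t => Ψ (u x t)) a b = A (a,b) := fun a b =>
    pdx_eq (fun _ _ => rfl) (hFd _)
  have hBeq : ∀ a b, pdt (fun x t => Ψ (u x t)) a b = B (a,b) := fun a b =>
    pdt_eq (fun _ _ => rfl) (hFd _)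
  have hA1eq : ∀ a b, pdx (pdx (fun x t => Ψ (u x t))) a b = A1 (a,b) := fun a b =>
    pdx_eq hAeq (hA.differentiable (by simp) _)
  have hB1eq : ∀ a b, pdx (pdt (fun x t => Ψ (u x t))) a b = B1 (a,b) := fun a b =>
    pdx_eq hBeq (hB.differentiable (by simp) _)
  -- derivative of Φ
  have hΦd : ∀ s, HasDerivAt Φ (μ⁻¹ * Real.exp (μ * Ψ s)) s := by
    intro s
    have hne : μ⁻¹ * Real.exp (μ * Ψ s) ≠ 0 := mul_ne_zero (inv_ne_zero hμ) (Real.exp_ne_zero _)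
    have hdiff : DifferentiableAt ℝ Φ s := by
      by_contra h
      have h0 := hΦ s
      rw [deriv_zero_of_not_differentiableAt h] at h0
      exact hne h0.symm
    rw [← hΦ s]
    exact hdiff.hasDerivAt
  -- derivative in t of each term
  have h1 : HasDerivAt (fun t' => A1 (x, t')) (fderiv ℝ A1 (x,t) (0,1)) t :=
    hasDerivAt_snd (hA1.differentiable (by simp) _)
  have h2 : HasDerivAt (fun t' => A (x, t')) (fderiv ℝ A (x,t) (0,1)) t :=
    hasDerivAt_snd (hA.differentiable (by simp) _)
  have hut : HasDerivAt (fun t' => u x t') (fderiv ℝ (fun p : ℝ×ℝ => u p.1 p.2) (x,t) (0,1)) t :=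
    hasDerivAt_snd (hu.differentiable (by simp) _)
  set ut : ℝ := fderiv ℝ (fun p : ℝ×ℝ => u p.1 p.2) (x,t) (0,1) with hutdef
  have h3 : HasDerivAt (fun t' => Φ (u x t')) (μ⁻¹ * Real.exp (μ * Ψ (u x t)) * ut) t :=
    (hΦd (u x t)).comp t hut
  -- total derivative
  have hmain : HasDerivAt (fun t' =>
      μ⁻¹ * pdx (pdx (fun x t => Ψ (u x t))) x t'
        - (1 / 2) * (pdx (fun x t => Ψ (u x t)) x t') ^ 2 - Φ (u x t'))
      (μ⁻¹ * fderiv ℝ A1 (x,t) (0,1)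
        - (1/2) * (2 * A (x,t) * fderiv ℝ A (x,t) (0,1))
        - μ⁻¹ * Real.exp (μ * Ψ (u x t)) * ut) t := by
    have e1 : (fun t' =>
        μ⁻¹ * pdx (pdx (fun x t => Ψ (u x t))) x t'
          - (1 / 2) * (pdx (fun x t => Ψ (u x t)) x t') ^ 2 - Φ (u x t'))
        = fun t' => μ⁻¹ * A1 (x,t') - (1/2) * (A (x,t'))^2 - Φ (u x t') := by
      funext t'; rw [hA1eq, hAeq]
    rw [e1]
    have h4 := ((h1.const_mul μ⁻¹).sub ((h2.pow 2).const_mul (1/2))).sub h3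
    convert h4 using 2
    · rfl
    · rfl
    · rfl
    push_cast
    ring
  rw [hmain.deriv]
  -- use the PDE
  have hpde' := hpde x t
  have hl : pdt u x t = ut := pdt_eq (fun _ _ => rfl) (hu.differentiable (by simp) _)
  -- compute RHS of PDE
  have hFx : HasDerivAt (fun x' => F (x', t)) (A (x,t)) x := hasDerivAt_fst (hFd _)
  have hexp : HasDerivAt (fun x' => Real.exp (-μ * F (x', t)))
      (Real.exp (-μ * F (x,t)) * (-μ * A (x,t))) x := (hFx.const_mul (-μ)).exp
  have hB1x : HasDerivAt (fun x' => B1 (x', t)) (fderiv ℝ B1 (x,t) (1,0)) x :=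
    hasDerivAt_fst (hB1.differentiable (by simp) _)
  have hrhs : HasDerivAt (fun x' => Real.exp (-μ * Ψ (u x' t)) *
      pdx (pdt (fun x t => Ψ (u x t))) x' t)
      (Real.exp (-μ * F (x,t)) * (-μ * A (x,t)) * B1 (x,t)
        + Real.exp (-μ * F (x,t)) * fderiv ℝ B1 (x,t) (1,0)) x := by
    have e2 : (fun x' => Real.exp (-μ * Ψ (u x' t)) * pdx (pdt (fun x t => Ψ (u x t))) x' t)
        = fun x' => Real.exp (-μ * F (x', t)) * B1 (x', t) := by
      funext x'; rw [hB1eq]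
    rw [e2]
    exact hexp.mul hB1x
  rw [hl, hrhs.deriv] at hpde'
  -- symmetry of mixed partials
  have sAB : ∀ p, fderiv ℝ A p (0,1) = B1 p := fun p => fderiv_swap hF p (1,0) (0,1)
  have sA1 : fderiv ℝ A1 (x,t) (0,1) = fderiv ℝ B1 (x,t) (1,0) := by
    have step1 : fderiv ℝ A1 (x,t) (0,1) = fderiv ℝ (fun q => fderiv ℝ A q (0,1)) (x,t) (1,0) :=
      fderiv_swap hA (x,t) (1,0) (0,1)
    have step2 : (fun q => fderiv ℝ A q (0,1)) = B1 := funext sAB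
    rw [step1, step2]
  -- final algebra
  have hΨu : Ψ (u x t) = F (x,t) := rfl
  rw [sA1, ← sAB (x,t)] at *
  rw [hpde', hΨu]
  have hee : Real.exp (μ * F (x,t)) * Real.exp (-μ * F (x,t)) = 1 := by
    rw [← Real.exp_add]; ring_nf; exact Real.exp_zero
  set E := Real.exp (-μ * F (x,t))
  set P := fderiv ℝ A (x,t) (0,1)
  set Q := fderiv ℝ A1 (x,t) (0,1)
  field_simp
  ring_nf
  linear_combination (μ*A (x,t)*P - (fderiv ℝ B1 (x,t)) (1,0)) * hee
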